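/- Let n ≥ 1, m > 0, r > 0, and let Λ be an n×n real symmetric positive definite matrix with smallest eigenvalue λ_min and largest eigenvalue λ_max. Define sat : ℝⁿ → ℝⁿ by sat(x) = (tanh(‖x‖)/‖x‖)·x for x ≠ 0 and sat(0) = 0, and let x : ℝ → ℝⁿ be differentiable with x′(t) = −m·sat(Λ x(t)) for all t, and ‖x(0)‖ ≤ r. Then for all t ≥ 0, ‖x(t)‖ ≤ ‖x(0)‖ · exp(−k t), where k = m λ_min tanh(λ_max r)/(λ_max r). -/

import Mathlib

open scoped Classical

/-- The smooth saturation function `sat(x) = (tanh ‖x‖ / ‖x‖) · x` (with `sat 0 = 0`). -/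
noncomputable def sat {n : ℕ} (x : EuclideanSpace ℝ (Fin n)) : EuclideanSpace ℝ (Fin n) :=
  if x = 0 then 0 else (Real.tanh ‖x‖ / ‖x‖) • x

/-! Along a solution, `V = ‖x‖²` has `V' = -2m ⟪x, sat (Λx)⟫ ≤ 0`, so the solution stays in the
ball of radius `r`. There `‖Λx‖ ≤ λmax r`, and since `tanh s / s` decreases in `s > 0`,
`⟪x, sat (Λx)⟫ ≥ tanh (λmax r) / (λmax r) · ⟪x, Λx⟫ ≥ tanh (λmax r) / (λmax r) · λmin ‖x‖²`.
Hence `V' ≤ -2kV`, and `V e^{2kt}` is nonincreasing. -/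

open Real Set
open scoped RealInnerProductSpace

namespace Real

theorem hasDerivAt_tanh (x : ℝ) : HasDerivAt tanh (1 / cosh x ^ 2) x := by
  have h := (hasDerivAt_sinh x).div (hasDerivAt_cosh x) (cosh_pos x).ne'
  rw [← sq, ← sq, cosh_sq_sub_sinh_sq] at h
  exact h.congr_of_eventuallyEq (.of_forall fun y => tanh_eq_sinh_div_cosh y)

theorem tanh_nonneg {x : ℝ} (hx : 0 ≤ x) : 0 ≤ tanh x := by
  rw [tanh_eq_sinh_div_cosh]
  exact div_nonneg (sinh_nonneg_iff.2 hx) (cosh_pos x).le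

theorem antitoneOn_tanh_div_self : AntitoneOn (fun x => tanh x / x) (Ioi 0) := by
  have hderiv : ∀ x ∈ Ioi (0 : ℝ), HasDerivAt (fun x => tanh x / x)
      ((1 / cosh x ^ 2 * x - tanh x * 1) / x ^ 2) x := fun x hx =>
    (hasDerivAt_tanh x).div (hasDerivAt_id x) (ne_of_gt hx)
  refine antitoneOn_of_hasDerivWithinAt_nonpos (convex_Ioi 0)
    (fun x hx => (hderiv x hx).continuousAt.continuousWithinAt)
    (fun x hx => (hderiv x (interior_subset hx)).hasDerivWithinAt) fun x hx => ?_
  rw [interior_Ioi, mem_Ioi] at hx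
  have hx2 : x ≤ sinh x * cosh x := by
    have := self_le_sinh_iff.2 (by positivity : (0 : ℝ) ≤ 2 * x)
    rw [sinh_two_mul] at this
    linarith
  have htanh : tanh x = sinh x * cosh x / cosh x ^ 2 := by
    rw [tanh_eq_sinh_div_cosh]
    field_simp [(cosh_pos x).ne']
  refine div_nonpos_of_nonpos_of_nonneg ?_ (sq_nonneg x)
  rw [htanh, mul_one, one_div_mul_eq_div, sub_nonpos]
  exact div_le_div_of_nonneg_right hx2 (sq_nonneg _)

end Real

section Sat

variable {n : ℕ} {v w : EuclideanSpace ℝ (Fin n)}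

theorem inner_sat (v w : EuclideanSpace ℝ (Fin n)) :
    ⟪v, sat w⟫ = tanh ‖w‖ / ‖w‖ * ⟪v, w⟫ := by
  unfold sat
  split_ifs with hw
  · simp [hw]
  · exact real_inner_smul_right _ _ _

theorem inner_neg_smul_sat_nonpos {m : ℝ} (hm : 0 ≤ m) (hvw : 0 ≤ ⟪v, w⟫) :
    ⟪v, (-m) • sat w⟫ ≤ 0 := by
  rw [real_inner_smul_right, inner_sat, neg_mul]
  have htanh := tanh_nonneg (norm_nonneg w)
  exact neg_nonpos.2 (by positivity)

theorem tanh_div_mul_le_inner_sat {R : ℝ} (hvw : 0 ≤ ⟪v, w⟫) (hwR : ‖w‖ ≤ R) :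
    tanh R / R * ⟪v, w⟫ ≤ ⟪v, sat w⟫ := by
  rw [inner_sat]
  rcases (norm_nonneg w).eq_or_lt with hw | hw
  · simp [norm_eq_zero.1 hw.symm]
  · exact mul_le_mul_of_nonneg_right (antitoneOn_tanh_div_self hw (hw.trans_le hwR) hwR) hvw

theorem inner_neg_smul_sat_le {m c R : ℝ} (hm : 0 ≤ m) (hc : 0 ≤ c) (hR : 0 ≤ R)
    (hvw : c * ‖v‖ ^ 2 ≤ ⟪v, w⟫) (hwR : ‖w‖ ≤ R) :
    ⟪v, (-m) • sat w⟫ ≤ -(m * c * (tanh R / R)) * ‖v‖ ^ 2 := by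
  have hslope : 0 ≤ tanh R / R := div_nonneg (tanh_nonneg hR) hR
  have hsat := tanh_div_mul_le_inner_sat ((by positivity : 0 ≤ c * ‖v‖ ^ 2).trans hvw) hwR
  rw [real_inner_smul_right]
  nlinarith [mul_le_mul_of_nonneg_left hvw hslope, mul_le_mul_of_nonneg_left hsat hm]

end Sat

namespace OrthonormalBasis

variable {ι E : Type*} [Fintype ι] [NormedAddCommGroup E] [InnerProductSpace ℝ E]
  {T : E →ₗ[ℝ] E} (b : OrthonormalBasis ι ℝ E) {μ : ι → ℝ}

theorem inner_apply_of_apply_eq_smul (hT : T.IsSymmetric) (hb : ∀ i, T (b i) = μ i • b i)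
    (i : ι) (v : E) : ⟪b i, T v⟫ = μ i * ⟪b i, v⟫ := by
  rw [← hT, hb, real_inner_smul_left]

theorem mul_norm_sq_le_inner_apply_self (hT : T.IsSymmetric) (hb : ∀ i, T (b i) = μ i • b i)
    {c : ℝ} (hc : ∀ i, c ≤ μ i) (v : E) : c * ‖v‖ ^ 2 ≤ ⟪v, T v⟫ := by
  rw [← b.sum_inner_mul_inner, ← b.sum_sq_inner_right, Finset.mul_sum]
  refine Finset.sum_le_sum fun i _ => ?_
  rw [b.inner_apply_of_apply_eq_smul hT hb, real_inner_comm]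
  nlinarith [mul_le_mul_of_nonneg_right (hc i) (sq_nonneg ⟪v, b i⟫)]

theorem norm_apply_le (hT : T.IsSymmetric) (hb : ∀ i, T (b i) = μ i • b i)
    {c : ℝ} (hc₀ : 0 ≤ c) (hc : ∀ i, |μ i| ≤ c) (v : E) : ‖T v‖ ≤ c * ‖v‖ := by
  rw [← pow_le_pow_iff_left₀ (norm_nonneg _) (by positivity) two_ne_zero, mul_pow,
    ← b.sum_sq_inner_right, ← b.sum_sq_inner_right, Finset.mul_sum]
  refine Finset.sum_le_sum fun i _ => ?_
  rw [b.inner_apply_of_apply_eq_smul hT hb, mul_pow]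
  exact mul_le_mul_of_nonneg_right (sq_le_sq.2 ((hc i).trans (le_abs_self c))) (sq_nonneg _)

end OrthonormalBasis

theorem Matrix.IsHermitian.toEuclideanLin_eigenvectorBasis {n : Type*} [Fintype n]
    [DecidableEq n] {A : Matrix n n ℝ} (hA : A.IsHermitian) (i : n) :
    A.toEuclideanLin (hA.eigenvectorBasis i) = hA.eigenvalues i • hA.eigenvectorBasis i :=
  congrArg (WithLp.toLp 2) (hA.mulVec_eigenvectorBasis i)

theorem norm_le_mul_exp_of_inner_deriv_le {E : Type*} [NormedAddCommGroup E]
    [InnerProductSpace ℝ E] {x x' : ℝ → E} {k : ℝ}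
    (hx : ∀ t, 0 ≤ t → HasDerivAt x (x' t) t)
    (hk : ∀ t, 0 ≤ t → ⟪x t, x' t⟫ ≤ -k * ‖x t‖ ^ 2) {t : ℝ} (ht : 0 ≤ t) :
    ‖x t‖ ≤ ‖x 0‖ * exp (-k * t) := by
  have hV : ∀ u, 0 ≤ u → HasDerivAt (fun u => ‖x u‖ ^ 2 * exp (2 * k * u))
      (2 * ⟪x u, x' u⟫ * exp (2 * k * u) + ‖x u‖ ^ 2 * (exp (2 * k * u) * (2 * k))) u :=
    fun u hu => (hx u hu).norm_sq.mul (by simpa using ((hasDerivAt_id u).const_mul (2 * k)).exp)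
  have hanti : AntitoneOn (fun u => ‖x u‖ ^ 2 * exp (2 * k * u)) (Ici 0) := by
    refine antitoneOn_of_hasDerivWithinAt_nonpos (convex_Ici 0)
      (fun u hu => (hV u hu).continuousAt.continuousWithinAt)
      (fun u hu => (hV u (interior_subset hu)).hasDerivWithinAt) fun u hu => ?_
    have hu : 0 ≤ u := interior_subset hu
    nlinarith [mul_le_mul_of_nonneg_right (hk u hu) (exp_pos (2 * k * u)).le]
  have hsq : ‖x t‖ ^ 2 * exp (2 * k * t) ≤ ‖x 0‖ ^ 2 := by
    simpa using hanti self_mem_Ici ht ht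
  rw [← pow_le_pow_iff_left₀ (norm_nonneg _) (by positivity) two_ne_zero, mul_pow, ← exp_nat_mul,
    show ((2 : ℕ) : ℝ) * (-k * t) = -(2 * k * t) by push_cast; ring, exp_neg,
    ← div_eq_mul_inv, le_div_iff₀ (exp_pos _)]
  exact hsq

theorem saturated_dynamics_exponential_decay_general (n : ℕ) (m r : ℝ)
    (hm : 0 < m)
    (Λ : Matrix (Fin n) (Fin n) ℝ) (hΛ : Λ.IsHermitian) (hPD : Λ.PosDef)
    (lmin lmax : ℝ)
    (hmin : IsLeast (Set.range hΛ.eigenvalues) lmin)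
    (hmax : IsGreatest (Set.range hΛ.eigenvalues) lmax)
    (x : ℝ → EuclideanSpace ℝ (Fin n))
    (hx : ∀ t : ℝ, HasDerivAt x ((-m) • sat (WithLp.toLp 2 (Λ.mulVec (x t)) : EuclideanSpace ℝ (Fin n))) t)
    (hx0 : ‖x 0‖ ≤ r) :
    ∀ t : ℝ, 0 ≤ t →
      ‖x t‖ ≤ ‖x 0‖ * Real.exp (-(m * lmin * (Real.tanh (lmax * r) / (lmax * r))) * t) := by
  intro t ht
  set T := Matrix.toEuclideanLin Λ
  have hT : T.IsSymmetric := Matrix.isSymmetric_toEuclideanLin_iff.2 hΛ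
  have hb := hΛ.toEuclideanLin_eigenvectorBasis
  obtain ⟨i₀, hi₀⟩ := hmin.1
  have hlmin : 0 ≤ lmin := hi₀ ▸ (hPD.eigenvalues_pos i₀).le
  have hlmax : 0 ≤ lmax := hlmin.trans (hmax.2 hmin.1)
  have hquad : ∀ v, lmin * ‖v‖ ^ 2 ≤ ⟪v, T v⟫ :=
    hΛ.eigenvectorBasis.mul_norm_sq_le_inner_apply_self hT hb fun i => hmin.2 ⟨i, rfl⟩
  have hnorm : ∀ v, ‖T v‖ ≤ lmax * ‖v‖ :=
    hΛ.eigenvectorBasis.norm_apply_le hT hb hlmax fun i =>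
      abs_le.2 ⟨by linarith [hmin.2 ⟨i, rfl⟩], hmax.2 ⟨i, rfl⟩⟩
  have hbounded : ∀ s, 0 ≤ s → ‖x s‖ ≤ ‖x 0‖ := fun s hs => by
    simpa using norm_le_mul_exp_of_inner_deriv_le (k := 0) (fun s _ => hx s) (fun s _ =>
      (inner_neg_smul_sat_nonpos hm.le ((by positivity : 0 ≤ lmin * ‖x s‖ ^ 2).trans
        (hquad (x s)))).trans_eq (by ring)) hs
  refine norm_le_mul_exp_of_inner_deriv_le (fun s _ => hx s) (fun s hs => ?_) ht
  have hxr : ‖x s‖ ≤ r := (hbounded s hs).trans hx0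
  exact inner_neg_smul_sat_le hm.le hlmin (mul_nonneg hlmax ((norm_nonneg _).trans hxr))
    (hquad _) ((hnorm _).trans (mul_le_mul_of_nonneg_left hxr hlmax))

/-- **Uniform semiglobal exponential stability of the saturated formation-keeping dynamics.**
If `x′(t) = −m · sat(Λ x(t))` with `Λ` symmetric positive definite (smallest eigenvalue
`λmin`, largest `λmax`) and `‖x(0)‖ ≤ r`, then `‖x(t)‖ ≤ ‖x(0)‖ e^{−kt}` for all `t ≥ 0`,
where `k = m λmin tanh(λmax r)/(λmax r)`. -/
theorem saturated_dynamics_exponential_decay (n : ℕ) (hn : 1 ≤ n) (m r : ℝ)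
    (hm : 0 < m) (hr : 0 < r)
    (Λ : Matrix (Fin n) (Fin n) ℝ) (hΛ : Λ.IsHermitian) (hPD : Λ.PosDef)
    (lmin lmax : ℝ)
    (hmin : IsLeast (Set.range hΛ.eigenvalues) lmin)
    (hmax : IsGreatest (Set.range hΛ.eigenvalues) lmax)
    (x : ℝ → EuclideanSpace ℝ (Fin n))
    (hx : ∀ t : ℝ, HasDerivAt x ((-m) • sat (WithLp.toLp 2 (Λ.mulVec (x t)) : EuclideanSpace ℝ (Fin n))) t)
    (hx0 : ‖x 0‖ ≤ r) :
    ∀ t : ℝ, 0 ≤ t →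
      ‖x t‖ ≤ ‖x 0‖ * Real.exp (-(m * lmin * (Real.tanh (lmax * r) / (lmax * r))) * t) :=
  saturated_dynamics_exponential_decay_general n m r hm Λ hΛ hPD lmin lmax hmin hmax x hx hx0
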